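/- arXiv:0911.2292 — 2 statements merged into one kernel-verified Lean document; each statement's English description precedes it below -/
import Mathlib

section
/- Let (A, B; k) be an MSTD fringe pair. As n → ∞, ρ_n(A, B; k) converges to a limit ρ(A, B; k), and ρ(A, B; k) = σ(A; k) · σ(B; k). -/
open Finset Filter Pointwise
open scoped Classical

/-- `n - S = {n - s : s ∈ S}`. -/
def mirror (n : ℕ) (S : Finset ℤ) : Finset ℤ := S.image (fun s => (n : ℤ) - s)

/-- Probability that a uniformly random subset of `[0,n]` satisfies `P`. -/
noncomputable def prAll (n : ℕ) (P : Finset ℤ → Prop) : ℝ :=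
  (((Finset.Icc (0:ℤ) n).powerset.filter P).card : ℝ) / 2 ^ (n + 1)

/-- Probability w.r.t. the uniform distribution on subsets of `[0,n]` containing `0` and `n`. -/
noncomputable def pr0n (n : ℕ) (P : Finset ℤ → Prop) : ℝ :=
  (((Finset.Icc (0:ℤ) n).powerset.filter
      (fun S => (0:ℤ) ∈ S ∧ (n:ℤ) ∈ S ∧ P S)).card : ℝ) / 2 ^ (n - 1)

/-- A finite set of integers is MSTD if it has more sums than differences. -/
def IsMSTD (S : Finset ℤ) : Prop := (S - S).card < (S + S).card

/-- Probability that a uniformly random subset of `[0,n]` is MSTD. -/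
noncomputable def rhoN (n : ℕ) : ℝ := prAll n IsMSTD

/-- The pair (number of missing sums, number of missing differences) of `S ⊆ [0,n]`. -/
def lam (n : ℕ) (S : Finset ℤ) : ℕ × ℕ :=
  (2 * n + 1 - (S + S).card, 2 * n + 1 - (S - S).card)

/-- Probability that a uniformly random subset of `[0,n]` satisfies `lam n S ∈ Λ`. -/
noncomputable def rhoL (Λ : Set (ℕ × ℕ)) (n : ℕ) : ℝ := prAll n (fun S => lam n S ∈ Λ)

/-- An MSTD fringe pair of order `k`. -/
def IsFringePair (A B : Finset ℤ) (k : ℕ) : Prop :=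
  A ⊆ Finset.Icc (0:ℤ) k ∧ B ⊆ Finset.Icc (0:ℤ) k ∧ (0:ℤ) ∈ A ∧ (0:ℤ) ∈ B ∧
    2 * ((A + B) ∩ Finset.Icc (0:ℤ) k).card <
      ((A + A) ∩ Finset.Icc (0:ℤ) k).card + ((B + B) ∩ Finset.Icc (0:ℤ) k).card

/-- `S ⊆ [0,n]` is a rich MSTD set with MSTD fringe pair `(A, B; k)`. -/
def IsRichWith (n : ℕ) (S A B : Finset ℤ) (k : ℕ) : Prop :=
  IsFringePair A B k ∧ 2 * k < n ∧ S ∩ Finset.Icc (0:ℤ) k = A ∧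
    mirror n S ∩ Finset.Icc (0:ℤ) k = B ∧
    Finset.Icc ((k:ℤ) + 1) (2 * n - k - 1) ⊆ S + S

/-- The strict partial order on MSTD fringe pairs: `(A', B'; k') < (A, B; k)`. -/
def FringeLt (A' B' : Finset ℤ) (k' : ℕ) (A B : Finset ℤ) (k : ℕ) : Prop :=
  IsFringePair A' B' k' ∧ IsFringePair A B k ∧ k' < k ∧
    A' = A ∩ Finset.Icc (0:ℤ) k' ∧ B' = B ∩ Finset.Icc (0:ℤ) k' ∧
    Finset.Icc ((k':ℤ) + 1) k ⊆ A + A ∧ Finset.Icc ((k':ℤ) + 1) k ⊆ B + B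

/-- A minimal MSTD fringe pair. -/
def MinimalFringePair (A B : Finset ℤ) (k : ℕ) : Prop :=
  IsFringePair A B k ∧ ¬ ∃ A' B' k', FringeLt A' B' k' A B k

/-- `σ_n(A; k)`: probability that a uniform random `T ⊆ [0,n]` is `k`-semi-rich with
prefix `(A; k)`. -/
noncomputable def sigmaN (A : Finset ℤ) (k n : ℕ) : ℝ :=
  (((Finset.Icc (0:ℤ) n).powerset.filter
      (fun T => T ∩ Finset.Icc (0:ℤ) k = A ∧ Finset.Icc ((k:ℤ) + 1) n ⊆ T + T)).card : ℝ) / 2 ^ n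

/-- `ρ_n(A, B; k) = 2^{-n+1} · #{S ⊆ [0,n] : S ∩ [0,k] = A, (n−S) ∩ [0,k] = B,
[k+1, 2n−k−1] ⊆ S+S}`. -/
noncomputable def rhoABn (A B : Finset ℤ) (k n : ℕ) : ℝ :=
  2 * (((Finset.Icc (0:ℤ) n).powerset.filter
      (fun S => S ∩ Finset.Icc (0:ℤ) k = A ∧ mirror n S ∩ Finset.Icc (0:ℤ) k = B ∧
        Finset.Icc ((k:ℤ) + 1) (2 * n - k - 1) ⊆ S + S)).card : ℝ) / 2 ^ n

/-- `ρ_{*n} = 2^{-n+1} · #{S ⊆ [0,n] : 0, n ∈ S and S is MSTD}`. -/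
noncomputable def rhoStarN (n : ℕ) : ℝ :=
  2 * (((Finset.Icc (0:ℤ) n).powerset.filter
      (fun S => (0:ℤ) ∈ S ∧ (n:ℤ) ∈ S ∧ IsMSTD S)).card : ℝ) / 2 ^ n

/-- `G_j(A; k) = #{T ⊆ [0,j] : T ∩ [0,k] = A, [k+1,j−1] ⊆ T+T, j ∉ T+T}`. -/
noncomputable def G (A : Finset ℤ) (k j : ℕ) : ℕ :=
  ((Finset.Icc (0:ℤ) j).powerset.filter
      (fun T => T ∩ Finset.Icc (0:ℤ) k = A ∧
        Finset.Icc ((k:ℤ) + 1) ((j:ℤ) - 1) ⊆ T + T ∧ (j:ℤ) ∉ T + T)).card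

/-- `S ⊆ [0,n]` is `k`-affluent. -/
def Affluent (n k : ℕ) (S : Finset ℤ) : Prop :=
  Finset.Icc ((k:ℤ) + 1) (2 * n - k - 1) ⊆ S + S ∧
    Finset.Icc (-(n:ℤ) + k + 1) ((n:ℤ) - k - 1) ⊆ S - S

/-- `μ_n(A, B; k)`: probability that a uniform random `S ⊆ [0,n]` is `k`-affluent
with fringe pair `(A, B; k)`. -/
noncomputable def muN (A B : Finset ℤ) (k n : ℕ) : ℝ :=
  prAll n (fun S => S ∩ Finset.Icc (0:ℤ) k = A ∧ mirror n S ∩ Finset.Icc (0:ℤ) k = B ∧ Affluent n k S)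

/-- The strict partial order on general fringe pairs. -/
def GFringeLt (A' B' : Finset ℤ) (k' : ℕ) (A B : Finset ℤ) (k : ℕ) : Prop :=
  A' ⊆ Finset.Icc (0:ℤ) k' ∧ B' ⊆ Finset.Icc (0:ℤ) k' ∧ A ⊆ Finset.Icc (0:ℤ) k ∧ B ⊆ Finset.Icc (0:ℤ) k ∧
    k' < k ∧ A' = A ∩ Finset.Icc (0:ℤ) k' ∧ B' = B ∩ Finset.Icc (0:ℤ) k' ∧
    Finset.Icc ((k':ℤ) + 1) k ⊆ A + A ∧ Finset.Icc ((k':ℤ) + 1) k ⊆ B + B ∧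
    Finset.Icc ((k':ℤ) + 1) k ⊆ A + B

/-- A minimal general fringe pair. -/
def GMinimal (A B : Finset ℤ) (k : ℕ) : Prop :=
  A ⊆ Finset.Icc (0:ℤ) k ∧ B ⊆ Finset.Icc (0:ℤ) k ∧ ¬ ∃ A' B' k', GFringeLt A' B' k' A B k

/-- `λ(A, B; k)` for a general fringe pair. -/
noncomputable def lamPair (A B : Finset ℤ) (k : ℕ) : ℕ × ℕ :=
  (2 * (k + 1) - ((A + A) ∩ Finset.Icc (0:ℤ) k).card - ((B + B) ∩ Finset.Icc (0:ℤ) k).card,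
   2 * (k + 1 - ((A + B) ∩ Finset.Icc (0:ℤ) k).card))

/-!
Fix `k ≤ m` with `2m + 1 ≤ n`. A set `S ⊆ [0,n]` is counted by `ρ_n(A, B; k)` exactly when
`S ∩ [0,m]` is `k`-semi-rich up to `m` with prefix `A`, the mirror image of `S ∩ [n-m, n]` is
`k`-semi-rich up to `m` with prefix `B`, and `S + S` contains the middle range `[m+1, 2n-m-1]`.
The two ends are independent, so without the middle condition the probability is exactly
`σ_m(A) σ_m(B)`; hence `ρ_n ≤ σ_m(A) σ_m(B)`. A given middle sum `s` is missed with probability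
at most `(3/4)^⌊m/2⌋`, because `s = x + (s - x)` for `⌊m/2⌋` pairwise disjoint pairs
`{x, s - x} ⊆ [0,n]`; so `σ_m(A) σ_m(B) ≤ ρ_n + 8n (3/4)^⌊m/2⌋`. Finally `σ_m` is nonincreasing
in `m`, hence convergent, and `m = ⌊(n-1)/2⌋` squeezes `ρ_n` to the product of the limits.
-/

open Topology

section PowersetCount

variable {α : Type*} [DecidableEq α]

theorem card_filter_powerset_union_of_disjoint {u v : Finset α} (huv : Disjoint u v)
    (P Q : Finset α → Prop) [DecidablePred P] [DecidablePred Q] :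
    #{S ∈ (u ∪ v).powerset | P (S ∩ u) ∧ Q (S ∩ v)} =
      #{S ∈ u.powerset | P S} * #{S ∈ v.powerset | Q S} := by
  have inter_left {T₁ T₂ : Finset α} (h₁ : T₁ ⊆ u) (h₂ : T₂ ⊆ v) : (T₁ ∪ T₂) ∩ u = T₁ := by
    rw [union_inter_distrib_right, inter_eq_left.2 h₁,
      disjoint_iff_inter_eq_empty.1 (huv.symm.mono_left h₂), union_empty]
  have inter_right {T₁ T₂ : Finset α} (h₁ : T₁ ⊆ u) (h₂ : T₂ ⊆ v) : (T₁ ∪ T₂) ∩ v = T₂ := by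
    rw [union_inter_distrib_right, inter_eq_left.2 h₂,
      disjoint_iff_inter_eq_empty.1 (huv.mono_left h₁), empty_union]
  rw [← card_product]
  refine card_nbij' (fun S => (S ∩ u, S ∩ v)) (fun p => p.1 ∪ p.2) ?_ ?_ ?_ ?_
  · intro S hS
    simp only [coe_filter, mem_powerset, Set.mem_ofPred_eq, coe_product, Set.mem_prod] at hS ⊢
    exact ⟨⟨inter_subset_right, hS.2.1⟩, inter_subset_right, hS.2.2⟩
  · rintro ⟨T₁, T₂⟩ hT
    simp only [coe_product, coe_filter, mem_powerset, Set.mem_prod, Set.mem_ofPred_eq] at hT ⊢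
    obtain ⟨⟨h₁, hP⟩, h₂, hQ⟩ := hT
    exact ⟨union_subset_union h₁ h₂, by rwa [inter_left h₁ h₂], by rwa [inter_right h₁ h₂]⟩
  · intro S hS
    simp only [coe_filter, mem_powerset, Set.mem_ofPred_eq] at hS
    dsimp only
    rw [← inter_union_distrib_left, inter_eq_left.2 hS.1]
  · rintro ⟨T₁, T₂⟩ hT
    simp only [coe_product, coe_filter, mem_powerset, Set.mem_prod, Set.mem_ofPred_eq] at hT
    simp only [inter_left hT.1.1 hT.2.1, inter_right hT.1.1 hT.2.1]

theorem card_filter_powerset_union_of_disjoint_right {u v : Finset α} (huv : Disjoint u v)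
    (Q : Finset α → Prop) [DecidablePred Q] :
    #{S ∈ (u ∪ v).powerset | Q (S ∩ v)} = 2 ^ #u * #{S ∈ v.powerset | Q S} := by
  simpa using card_filter_powerset_union_of_disjoint huv (fun _ => True) Q

theorem card_filter_powerset_not_superset (p : Finset α) :
    #{S ∈ p.powerset | ¬ p ⊆ S} = 2 ^ #p - 1 := by
  have : {S ∈ p.powerset | ¬ p ⊆ S} = p.powerset.erase p := by
    ext S
    simp only [mem_filter, mem_powerset, mem_erase]
    constructor
    · rintro ⟨hS, hpS⟩
      exact ⟨fun h => hpS h.ge, hS⟩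
    · rintro ⟨hne, hS⟩
      exact ⟨hS, fun h => hne (hS.antisymm h)⟩
  rw [this, card_erase_of_mem (mem_powerset_self p), card_powerset]

end PowersetCount

theorem card_filter_powerset_forall_pair_not_subset_mul {g I : Finset ℤ} {s : ℤ}
    (hI : ∀ x ∈ I, 2 * x < s ∧ x ∈ g ∧ s - x ∈ g) :
    #{S ∈ g.powerset | ∀ x ∈ I, ¬ {x, s - x} ⊆ S} * 4 ^ #I = 3 ^ #I * 2 ^ #g := by
  induction I using Finset.induction_on generalizing g with
  | empty => simp
  | insert x I hxI ih =>
    obtain ⟨hx, hxg, hsxg⟩ := hI x (mem_insert_self x I)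
    set p : Finset ℤ := {x, s - x} with hp_def
    have hpg : p ⊆ g := insert_subset hxg (singleton_subset_iff.2 hsxg)
    have hp : #p = 2 := card_pair (by omega)
    have hI' : ∀ y ∈ I, 2 * y < s ∧ y ∈ g \ p ∧ s - y ∈ g \ p := by
      intro y hy
      have hyx : y ≠ x := fun h => hxI (h ▸ hy)
      obtain ⟨hys, hyg, hsyg⟩ := hI y (mem_insert_of_mem hy)
      simp only [Finset.mem_sdiff, hp_def, mem_insert, mem_singleton]
      exact ⟨hys, ⟨hyg, by omega⟩, hsyg, by omega⟩
    have hsplit : {S ∈ g.powerset | ∀ y ∈ insert x I, ¬ {y, s - y} ⊆ S} =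
        {S ∈ (p ∪ g \ p).powerset | ¬ p ⊆ S ∩ p ∧ ∀ y ∈ I, ¬ {y, s - y} ⊆ S ∩ (g \ p)} := by
      rw [union_sdiff_of_subset hpg]
      refine filter_congr fun S _ => ?_
      rw [forall_mem_insert, subset_inter_iff, and_iff_left subset_rfl]
      refine and_congr_right fun _ => forall₂_congr fun y hy => ?_
      rw [subset_inter_iff, and_iff_left (insert_subset (hI' y hy).2.1
        (singleton_subset_iff.2 (hI' y hy).2.2))]
    have hcard : #(g \ p) + 2 = #g := hp ▸ card_sdiff_add_card_eq_card hpg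
    rw [hsplit, card_filter_powerset_union_of_disjoint (P := fun T => ¬ p ⊆ T)
      (Q := fun T => ∀ y ∈ I, ¬ {y, s - y} ⊆ T) disjoint_sdiff,
      card_filter_powerset_not_superset, hp, card_insert_of_notMem hxI, ← hcard]
    calc (2 ^ 2 - 1) * #{S ∈ (g \ p).powerset | ∀ y ∈ I, ¬ {y, s - y} ⊆ S} * 4 ^ (#I + 1)
        = 12 * (#{S ∈ (g \ p).powerset | ∀ y ∈ I, ¬ {y, s - y} ⊆ S} * 4 ^ #I) := by ring
      _ = 3 ^ (#I + 1) * 2 ^ (#(g \ p) + 2) := by rw [ih hI']; ring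

theorem card_filter_notMem_add_self_mul_le {n q : ℕ} {s : ℤ} (hs : 2 * q ≤ s)
    (hs' : s + 2 * q ≤ 2 * n) :
    #{S ∈ (Icc (0 : ℤ) n).powerset | s ∉ S + S} * 4 ^ q ≤ 3 ^ q * 2 ^ (n + 1) := by
  -- the pairs `{x, s - x}` with `x ∈ [l, l + q)` are disjoint and lie in `[0, n]`
  set l := max 0 (s - n)
  have hI : ∀ x ∈ Ico l (l + q), 2 * x < s ∧ x ∈ Icc (0 : ℤ) n ∧ s - x ∈ Icc (0 : ℤ) n := by
    intro x hx
    simp only [mem_Ico, mem_Icc] at hx ⊢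
    omega
  have hpairs := card_filter_powerset_forall_pair_not_subset_mul hI
  simp only [Int.card_Ico, Int.card_Icc, add_sub_cancel_left, Int.toNat_natCast, sub_zero] at hpairs
  rw [show (n + 1 : ℤ).toNat = n + 1 by omega] at hpairs
  refine le_of_le_of_eq (Nat.mul_le_mul_right _ (card_le_card (monotone_filter_right _ ?_))) hpairs
  intro S _ hS x _ hx
  have hx₁ := hx (mem_insert_self x _)
  have hx₂ := hx (mem_insert_of_mem (mem_singleton_self (s - x)))
  exact hS (by simpa using add_mem_add hx₁ hx₂)

theorem card_filter_not_Icc_subset_add_mul_le (m n : ℕ) :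
    #{S ∈ (Icc (0 : ℤ) n).powerset | ¬ Icc ((m : ℤ) + 1) (2 * n - m - 1) ⊆ S + S} * 4 ^ (m / 2) ≤
      2 * n * (3 ^ (m / 2) * 2 ^ (n + 1)) := by
  have hmiss : {S ∈ (Icc (0 : ℤ) n).powerset | ¬ Icc ((m : ℤ) + 1) (2 * n - m - 1) ⊆ S + S} ⊆
      (Icc ((m : ℤ) + 1) (2 * n - m - 1)).biUnion
        fun s => {S ∈ (Icc (0 : ℤ) n).powerset | s ∉ S + S} := by
    intro S hS
    obtain ⟨hSn, hmid⟩ := mem_filter.1 hS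
    obtain ⟨s, hs, hsS⟩ := not_subset.1 hmid
    exact mem_biUnion.2 ⟨s, hs, mem_filter.2 ⟨hSn, hsS⟩⟩
  calc _ ≤ (∑ s ∈ Icc ((m : ℤ) + 1) (2 * n - m - 1),
        #{S ∈ (Icc (0 : ℤ) n).powerset | s ∉ S + S}) * 4 ^ (m / 2) :=
        Nat.mul_le_mul_right _ ((card_le_card hmiss).trans card_biUnion_le)
    _ ≤ ∑ _s ∈ Icc ((m : ℤ) + 1) (2 * n - m - 1), 3 ^ (m / 2) * 2 ^ (n + 1) := by
        rw [sum_mul]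
        refine sum_le_sum fun s hs => ?_
        rw [mem_Icc] at hs
        exact card_filter_notMem_add_self_mul_le (by omega) (by omega)
    _ ≤ 2 * n * (3 ^ (m / 2) * 2 ^ (n + 1)) := by
        rw [sum_const, smul_eq_mul, Int.card_Icc]
        exact Nat.mul_le_mul_right _ (by omega)

section Mirror

variable {n : ℕ} {S T : Finset ℤ}

theorem mem_mirror {x : ℤ} : x ∈ mirror n S ↔ (n : ℤ) - x ∈ S := by
  simp only [mirror, mem_image]
  exact ⟨fun ⟨y, hy, hyx⟩ => by rwa [← hyx, sub_sub_cancel], fun h => ⟨_, h, sub_sub_cancel _ _⟩⟩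

@[simp]
theorem mirror_mirror : mirror n (mirror n S) = S := by
  ext x
  simp [mem_mirror]

theorem mirror_subset_mirror : mirror n S ⊆ mirror n T ↔ S ⊆ T :=
  image_subset_image_iff sub_right_injective

theorem mirror_inter : mirror n (S ∩ T) = mirror n S ∩ mirror n T := by
  ext x
  simp [mem_mirror]

theorem mirror_Icc (a b : ℤ) : mirror n (Icc a b) = Icc (n - b) (n - a) := by
  ext x
  simp only [mem_mirror, mem_Icc]
  omega

theorem nonneg_of_mem_mirror (hS : S ⊆ Icc 0 n) {x : ℤ} (hx : x ∈ mirror n S) : 0 ≤ x := by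
  have := hS (mem_mirror.1 hx)
  rw [mem_Icc] at this
  omega

theorem mem_mirror_add_mirror {x : ℤ} : x ∈ mirror n S + mirror n S ↔ 2 * n - x ∈ S + S := by
  simp only [Finset.mem_add, mem_mirror]
  constructor
  · rintro ⟨a, ha, b, hb, rfl⟩
    exact ⟨_, ha, _, hb, by ring⟩
  · rintro ⟨a, ha, b, hb, hab⟩
    exact ⟨n - a, by simpa using ha, n - b, by simpa using hb, by omega⟩

theorem Icc_subset_mirror_add_mirror {a b : ℤ} :
    Icc a b ⊆ mirror n S + mirror n S ↔ Icc (2 * n - b) (2 * n - a) ⊆ S + S := by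
  constructor <;> intro h x hx <;> rw [mem_Icc] at hx
  · have hx' : 2 * n - x ∈ Icc a b := mem_Icc.2 ⟨by omega, by omega⟩
    simpa using mem_mirror_add_mirror.1 (h hx')
  · exact mem_mirror_add_mirror.2 (h (mem_Icc.2 (by omega)))

theorem card_filter_powerset_mirror (w : Finset ℤ) (P : Finset ℤ → Prop) [DecidablePred P] :
    #{T ∈ w.powerset | P (mirror n T)} = #{T ∈ (mirror n w).powerset | P T} := by
  refine card_nbij' (mirror n) (mirror n) ?_ ?_ (fun _ _ => mirror_mirror)
    (fun _ _ => mirror_mirror)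
  · intro T hT
    simp only [coe_filter, mem_powerset, Set.mem_ofPred_eq] at hT ⊢
    exact ⟨mirror_subset_mirror.2 hT.1, hT.2⟩
  · intro T hT
    simp only [coe_filter, mem_powerset, Set.mem_ofPred_eq] at hT ⊢
    rw [← mirror_subset_mirror (n := n), mirror_mirror]
    exact hT

end Mirror

def IsSemiRich (A : Finset ℤ) (k m : ℕ) (T : Finset ℤ) : Prop :=
  T ∩ Icc 0 (k : ℤ) = A ∧ Icc ((k : ℤ) + 1) m ⊆ T + T

noncomputable def semiRichCount (A : Finset ℤ) (k m : ℕ) : ℕ :=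
  #{T ∈ (Icc (0 : ℤ) m).powerset | IsSemiRich A k m T}

theorem sigmaN_eq_semiRichCount_div (A : Finset ℤ) (k m : ℕ) :
    sigmaN A k m = semiRichCount A k m / 2 ^ m := by
  simp only [sigmaN, semiRichCount, IsSemiRich]
  congr

theorem Icc_subset_inter_add_inter_iff {T : Finset ℤ} (hT : ∀ x ∈ T, 0 ≤ x) {a b M : ℤ}
    (hb : b ≤ M) : Icc a b ⊆ T ∩ Icc 0 M + T ∩ Icc 0 M ↔ Icc a b ⊆ T + T := by
  refine ⟨fun h => h.trans (add_subset_add inter_subset_left inter_subset_left), fun h x hx => ?_⟩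
  obtain ⟨y, hy, z, hz, rfl⟩ := Finset.mem_add.1 (h hx)
  have := (mem_Icc.1 hx).2
  have := hT y hy
  have := hT z hz
  exact add_mem_add (mem_inter.2 ⟨hy, mem_Icc.2 ⟨by omega, by omega⟩⟩)
    (mem_inter.2 ⟨hz, mem_Icc.2 ⟨by omega, by omega⟩⟩)

theorem isSemiRich_inter_Icc_iff {A T : Finset ℤ} {k m : ℕ} (hT : ∀ x ∈ T, 0 ≤ x) (hk : k ≤ m) :
    IsSemiRich A k m (T ∩ Icc 0 (m : ℤ)) ↔ T ∩ Icc 0 (k : ℤ) = A ∧ Icc ((k : ℤ) + 1) m ⊆ T + T := by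
  rw [IsSemiRich, Icc_subset_inter_add_inter_iff hT le_rfl, inter_assoc,
    inter_eq_right.2 (Icc_subset_Icc_right (by exact_mod_cast hk))]

theorem semiRichCount_succ_le (A : Finset ℤ) {k n : ℕ} (hk : k ≤ n) :
    semiRichCount A k (n + 1) ≤ 2 * semiRichCount A k n := by
  have hsplit : Icc (0 : ℤ) (n + 1 : ℕ) = ({(n : ℤ) + 1} : Finset ℤ) ∪ Icc 0 n := by
    ext x
    simp only [mem_union, mem_singleton, mem_Icc]
    omega
  have hdisj : Disjoint ({(n : ℤ) + 1} : Finset ℤ) (Icc 0 (n : ℤ)) := by simp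
  calc semiRichCount A k (n + 1)
      ≤ #{T ∈ (({(n : ℤ) + 1} : Finset ℤ) ∪ Icc 0 (n : ℤ)).powerset |
          IsSemiRich A k n (T ∩ Icc 0 n)} := by
        rw [semiRichCount, hsplit]
        refine card_le_card (monotone_filter_right _ fun T hT hrich => ?_)
        have hT0 : ∀ x ∈ T, 0 ≤ x := fun x hx => by
          have := mem_powerset.1 hT hx
          simp only [mem_union, mem_singleton, mem_Icc] at this
          omega
        refine (isSemiRich_inter_Icc_iff hT0 hk).2
          ⟨hrich.1, (Icc_subset_Icc_right ?_).trans hrich.2⟩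
        push_cast
        omega
    _ = 2 * semiRichCount A k n := by
        rw [card_filter_powerset_union_of_disjoint_right hdisj (IsSemiRich A k n), card_singleton,
          pow_one, semiRichCount]

theorem sigmaN_succ_le (A : Finset ℤ) {k n : ℕ} (hk : k ≤ n) :
    sigmaN A k (n + 1) ≤ sigmaN A k n := by
  rw [sigmaN_eq_semiRichCount_div, sigmaN_eq_semiRichCount_div, pow_succ,
    div_le_div_iff₀ (by positivity) (by positivity)]
  have := semiRichCount_succ_le A hk
  calc _ ≤ (2 * semiRichCount A k n : ℕ) * (2 : ℝ) ^ n := by gcongr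
    _ = _ := by push_cast; ring

theorem exists_tendsto_sigmaN (A : Finset ℤ) (k : ℕ) : ∃ s, Tendsto (sigmaN A k) atTop (𝓝 s) := by
  have hanti : Antitone fun j => sigmaN A k (j + k) :=
    antitone_nat_of_succ_le fun j => by
      simpa only [Nat.add_right_comm j 1 k] using sigmaN_succ_le A (Nat.le_add_left k j)
  have hbdd : BddBelow (Set.range fun j => sigmaN A k (j + k)) :=
    ⟨0, Set.forall_mem_range.2 fun j => by rw [sigmaN_eq_semiRichCount_div]; positivity⟩
  exact ⟨_, (tendsto_add_atTop_iff_nat k).1 (tendsto_atTop_ciInf hanti hbdd)⟩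

def IsFringeRich (A B : Finset ℤ) (k n : ℕ) (S : Finset ℤ) : Prop :=
  S ∩ Icc 0 (k : ℤ) = A ∧ mirror n S ∩ Icc 0 (k : ℤ) = B ∧
    Icc ((k : ℤ) + 1) (2 * n - k - 1) ⊆ S + S

theorem rhoABn_eq_card_div (A B : Finset ℤ) (k n : ℕ) :
    rhoABn A B k n = 2 * #{S ∈ (Icc (0 : ℤ) n).powerset | IsFringeRich A B k n S} / 2 ^ n := by
  simp only [rhoABn, IsFringeRich]
  congr

noncomputable def semiRichEnds (A B : Finset ℤ) (k m n : ℕ) : Finset (Finset ℤ) :=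
  {S ∈ (Icc (0 : ℤ) n).powerset |
    IsSemiRich A k m (S ∩ Icc 0 (m : ℤ)) ∧ IsSemiRich B k m (mirror n S ∩ Icc 0 (m : ℤ))}

section Decomposition

variable {A B : Finset ℤ} {k m n : ℕ}

theorem isFringeRich_iff (hk : k ≤ m) (hmn : 2 * m + 1 ≤ n) {S : Finset ℤ}
    (hS : S ⊆ Icc 0 (n : ℤ)) :
    IsFringeRich A B k n S ↔
      (IsSemiRich A k m (S ∩ Icc 0 (m : ℤ)) ∧ IsSemiRich B k m (mirror n S ∩ Icc 0 (m : ℤ))) ∧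
        Icc ((m : ℤ) + 1) (2 * n - m - 1) ⊆ S + S := by
  have hS0 : ∀ x ∈ S, 0 ≤ x := fun x hx => (mem_Icc.1 (hS hx)).1
  rw [IsFringeRich, isSemiRich_inter_Icc_iff hS0 hk,
    isSemiRich_inter_Icc_iff (fun _ => nonneg_of_mem_mirror hS) hk, Icc_subset_mirror_add_mirror]
  have hunion : Icc ((k : ℤ) + 1) (2 * n - k - 1) =
      Icc ((k : ℤ) + 1) m ∪
        (Icc ((m : ℤ) + 1) (2 * n - m - 1) ∪ Icc (2 * n - m) (2 * n - (k + 1))) := by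
    ext x
    simp only [mem_union, mem_Icc]
    omega
  rw [hunion, union_subset_iff, union_subset_iff]
  tauto

theorem card_semiRichEnds (hmn : 2 * m + 1 ≤ n) :
    #(semiRichEnds A B k m n) =
      semiRichCount A k m * (2 ^ (n - (2 * m + 1)) * semiRichCount B k m) := by
  set u := Icc (0 : ℤ) m
  set v := Icc ((m : ℤ) + 1) n
  set w := Icc ((n : ℤ) - m) n
  have huv : Icc (0 : ℤ) n = u ∪ v := by
    ext x
    simp only [u, v, mem_union, mem_Icc]
    omega
  have hv : v = Icc ((m : ℤ) + 1) (n - m - 1) ∪ w := by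
    ext x
    simp only [v, w, mem_union, mem_Icc]
    omega
  have hsuffix (S : Finset ℤ) : mirror n S ∩ u = mirror n (S ∩ v ∩ w) := by
    have hwv : w ⊆ v := hv ▸ subset_union_right
    rw [inter_assoc, inter_eq_right.2 hwv, mirror_inter, mirror_Icc]
    simp only [u, sub_self, sub_sub_cancel]
  calc _ = #{S ∈ (u ∪ v).powerset |
        IsSemiRich A k m (S ∩ u) ∧ IsSemiRich B k m (mirror n (S ∩ v ∩ w))} := by
        simp only [semiRichEnds, huv, ← hsuffix]
        rfl
    _ = semiRichCount A k m * #{T ∈ v.powerset | IsSemiRich B k m (mirror n (T ∩ w))} :=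
        card_filter_powerset_union_of_disjoint
          (disjoint_left.2 fun x hxu hxv => by simp only [u, v, mem_Icc] at hxu hxv; omega)
          (IsSemiRich A k m) (fun T => IsSemiRich B k m (mirror n (T ∩ w)))
    _ = semiRichCount A k m * (2 ^ (n - (2 * m + 1)) * semiRichCount B k m) := by
        rw [hv, card_filter_powerset_union_of_disjoint_right
          (disjoint_left.2 fun x hx hxw => by simp only [w, mem_Icc] at hx hxw; omega)
          (fun T => IsSemiRich B k m (mirror n T)),
          card_filter_powerset_mirror w (IsSemiRich B k m), mirror_Icc, Int.card_Icc]
        simp only [sub_self, sub_sub_cancel, semiRichCount]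
        congr 3
        omega

end Decomposition

section Sandwich

variable (A B : Finset ℤ) {k m n : ℕ}

theorem sigmaN_mul_sigmaN_eq (hmn : 2 * m + 1 ≤ n) :
    sigmaN A k m * sigmaN B k m = 2 * #(semiRichEnds A B k m n) / 2 ^ n := by
  rw [card_semiRichEnds hmn, sigmaN_eq_semiRichCount_div, sigmaN_eq_semiRichCount_div]
  obtain ⟨j, rfl⟩ := Nat.exists_eq_add_of_le hmn
  rw [Nat.add_sub_cancel_left]
  push_cast
  field_simp
  ring

theorem card_isFringeRich_add_card (hk : k ≤ m) (hmn : 2 * m + 1 ≤ n) :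
    #{S ∈ (Icc (0 : ℤ) n).powerset | IsFringeRich A B k n S} +
      #{S ∈ semiRichEnds A B k m n | ¬ Icc ((m : ℤ) + 1) (2 * n - m - 1) ⊆ S + S} =
    #(semiRichEnds A B k m n) := by
  rw [filter_congr fun S hS => isFringeRich_iff hk hmn (mem_powerset.1 hS), ← filter_filter]
  exact card_filter_add_card_filter_not _

theorem rhoABn_le_sigmaN_mul_sigmaN (hk : k ≤ m) (hmn : 2 * m + 1 ≤ n) :
    rhoABn A B k n ≤ sigmaN A k m * sigmaN B k m := by
  rw [rhoABn_eq_card_div, sigmaN_mul_sigmaN_eq A B hmn, ← card_isFringeRich_add_card A B hk hmn]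
  gcongr
  exact_mod_cast Nat.le_add_right _ _

theorem sigmaN_mul_sigmaN_le_rhoABn_add (hk : k ≤ m) (hmn : 2 * m + 1 ≤ n) :
    sigmaN A k m * sigmaN B k m ≤ rhoABn A B k n + 8 * n * (3 / 4) ^ (m / 2) := by
  set bad := #{S ∈ semiRichEnds A B k m n | ¬ Icc ((m : ℤ) + 1) (2 * n - m - 1) ⊆ S + S}
  have hbad : bad * 4 ^ (m / 2) ≤ 2 * n * (3 ^ (m / 2) * 2 ^ (n + 1)) :=
    (Nat.mul_le_mul_right _ (card_le_card (filter_subset_filter _ (filter_subset _ _)))).trans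
      (card_filter_not_Icc_subset_add_mul_le m n)
  have hbad' : 2 * (bad : ℝ) / 2 ^ n ≤ 8 * n * (3 / 4) ^ (m / 2) := by
    have hbad_real : (bad : ℝ) * 4 ^ (m / 2) ≤ 2 * n * (3 ^ (m / 2) * 2 ^ (n + 1)) := by
      exact_mod_cast hbad
    rw [div_le_iff₀ (by positivity), div_pow]
    calc 2 * (bad : ℝ) = 2 * (bad * 4 ^ (m / 2)) / 4 ^ (m / 2) := by field_simp
      _ ≤ 2 * (2 * n * (3 ^ (m / 2) * 2 ^ (n + 1))) / 4 ^ (m / 2) := by gcongr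
      _ = 8 * n * (3 ^ (m / 2) / 4 ^ (m / 2)) * 2 ^ n := by rw [pow_succ]; field_simp; ring
  rw [rhoABn_eq_card_div, sigmaN_mul_sigmaN_eq A B hmn, ← card_isFringeRich_add_card A B hk hmn]
  push_cast
  rw [mul_add, add_div]
  exact add_le_add_right hbad' _

end Sandwich

theorem tendsto_natCast_mul_three_quarters_pow :
    Tendsto (fun n : ℕ => (n : ℝ) * (3 / 4) ^ ((n - 1) / 2 / 2)) atTop (𝓝 0) := by
  set q : ℕ → ℕ := fun n => (n - 1) / 2 / 2
  have hq : Tendsto q atTop atTop :=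
    tendsto_atTop_atTop.2 fun b => ⟨4 * b + 1, fun n hn => by simp only [q]; omega⟩
  have hgeom :
      Tendsto (fun j : ℕ => 4 * ((j : ℝ) * (3 / 4) ^ j) + 4 * (3 / 4 : ℝ) ^ j) atTop (𝓝 0) := by
    simpa using ((tendsto_self_mul_const_pow_of_lt_one (by norm_num) (by norm_num)).const_mul 4).add
      ((tendsto_pow_atTop_nhds_zero_of_lt_one (by norm_num) (by norm_num)).const_mul 4)
  refine squeeze_zero (fun n => by positivity) (fun n => ?_) (hgeom.comp hq)
  have hn : (n : ℝ) ≤ 4 * q n + 4 := by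
    exact_mod_cast (show n ≤ 4 * q n + 4 by simp only [q]; omega)
  have := pow_nonneg (show (0 : ℝ) ≤ 3 / 4 by norm_num) (q n)
  simp only [Function.comp]
  nlinarith

theorem tendsto_sigmaN_mul_sigmaN_sub_rhoABn (A B : Finset ℤ) (k : ℕ) :
    Tendsto (fun n => sigmaN A k ((n - 1) / 2) * sigmaN B k ((n - 1) / 2) - rhoABn A B k n)
      atTop (𝓝 0) := by
  have hm : ∀ᶠ n in atTop, k ≤ (n - 1) / 2 ∧ 2 * ((n - 1) / 2) + 1 ≤ n :=
    eventually_atTop.2 ⟨2 * k + 1, fun n hn => ⟨by omega, by omega⟩⟩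
  refine squeeze_zero' (hm.mono fun n ⟨hk, hmn⟩ => ?_) (hm.mono fun n ⟨hk, hmn⟩ => ?_)
    (by simpa [mul_assoc] using tendsto_natCast_mul_three_quarters_pow.const_mul 8)
  · exact sub_nonneg.2 (rhoABn_le_sigmaN_mul_sigmaN A B hk hmn)
  · have := sigmaN_mul_sigmaN_le_rhoABn_add A B hk hmn
    linarith

theorem rho_pair_limit_general (A B : Finset ℤ) (k : ℕ) :
    ∃ sA sB : ℝ,
      Filter.Tendsto (sigmaN A k) Filter.atTop (nhds sA) ∧
      Filter.Tendsto (sigmaN B k) Filter.atTop (nhds sB) ∧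
      Filter.Tendsto (rhoABn A B k) Filter.atTop (nhds (sA * sB)) := by
  obtain ⟨sA, hA⟩ := exists_tendsto_sigmaN A k
  obtain ⟨sB, hB⟩ := exists_tendsto_sigmaN B k
  have hm : Tendsto (fun n : ℕ => (n - 1) / 2) atTop atTop :=
    tendsto_atTop_atTop.2 fun b => ⟨2 * b + 1, fun n hn => by omega⟩
  refine ⟨sA, sB, hA, hB, ?_⟩
  simpa using ((hA.comp hm).mul (hB.comp hm)).sub (tendsto_sigmaN_mul_sigmaN_sub_rhoABn A B k)

/-- for an MSTD fringe pair `(A,B;k)`, `ρ_n(A,B;k)` converges and its limit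
is `σ(A;k)·σ(B;k)`. -/
theorem rho_pair_limit (A B : Finset ℤ) (k : ℕ) (h : IsFringePair A B k) :
    ∃ sA sB : ℝ,
      Filter.Tendsto (sigmaN A k) Filter.atTop (nhds sA) ∧
      Filter.Tendsto (sigmaN B k) Filter.atTop (nhds sB) ∧
      Filter.Tendsto (rhoABn A B k) Filter.atTop (nhds (sA * sB)) :=
  rho_pair_limit_general A B k
end

section
/- Let n and k̄ be positive integers with n > 2k̄, and let S be a uniformly random subset of [0,n] containing 0 and n. Then P([k̄+1, 2n−k̄−1] ⊄ S+S) ≤ (3/4)^{k̄/2} / (1 − √3/2), and P([−n+k̄+1, n−k̄−1] ⊄ S−S) ≤ 2·(3/4)^{k̄} + (n+1)·(3/4)^{(n−1)/3}. -/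
open Finset Filter Pointwise
open scoped Classical

/-!
If `m ∉ S + S`, then `S` misses a point of every pair `{a, m - a} ⊆ [0, n]`; if `d ∉ S - S`, it
misses a point of every pair `{a, a + d} ⊆ [0, n]`. Since `0, n ∈ S` and the interior points are
independent fair coins, pairwise disjoint pairs give independent events: each pair contributes a
factor `3/4`, and a pair through `0` or `n` a factor `1/2`. For a sum `m` the pairs with
`a ≤ m / 2` give about `min m (2n - m) / 2` factors; for a difference `d` the pairs with
`⌊a / d⌋` even are disjoint, and there are at least `min d (n - d + 1)` and at least
`(n - d + 1) / 2` of them. A union bound over the middle sums (a two-sided geometric series in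
`√3 / 2`) and over the middle differences gives the two estimates.
-/

section

variable {ι : Type*}

theorem card_filter_forall_not_subset_le {α : Type*} [DecidableEq α] (X : Finset α)
    (I : Finset ι) (Q : ι → Finset α) (hQ : ∀ i ∈ I, Q i ⊆ X)
    (hdisj : (I : Set ι).PairwiseDisjoint Q) :
    (#{T ∈ X.powerset | ∀ i ∈ I, ¬ Q i ⊆ T} : ℝ) ≤
      (∏ i ∈ I, (1 - (1 / 2 : ℝ) ^ #(Q i))) * 2 ^ #X := by
  induction I using Finset.induction_on generalizing X with
  | empty => simp
  | insert j I hj ih =>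
    have hQj : Q j ⊆ X := hQ j (mem_insert_self j I)
    have hQI : ∀ i ∈ I, Q i ⊆ X \ Q j := fun i hi =>
      subset_sdiff.2 ⟨hQ i (mem_insert_of_mem hi),
        hdisj (by simp [hi]) (by simp) (by rintro rfl; exact hj hi)⟩
    set Y := {T ∈ (X \ Q j).powerset | ∀ i ∈ I, ¬ Q i ⊆ T}
    have hsplit : #{T ∈ X.powerset | ∀ i ∈ insert j I, ¬ Q i ⊆ T} ≤ (2 ^ #(Q j) - 1) * #Y := by
      rw [← card_powerset (Q j), ← card_erase_of_mem (mem_powerset_self _), ← card_product]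
      refine card_le_card_of_injOn (fun T => (T ∩ Q j, T \ Q j)) ?_ ?_
      · intro T hT
        simp only [coe_filter, Set.mem_ofPred_eq, mem_powerset, forall_mem_insert] at hT
        obtain ⟨hTX, hTj, hTI⟩ := hT
        simp only [Y, coe_product, Set.mem_prod, mem_coe, mem_erase, mem_powerset, mem_filter]
        refine ⟨⟨fun h => hTj (h ▸ inter_subset_left), inter_subset_right⟩,
          sdiff_subset_sdiff hTX le_rfl, fun i hi h => hTI i hi (h.trans sdiff_subset)⟩
      · intro T₁ _ T₂ _ h
        simp only [Prod.mk.injEq] at h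
        rw [← sdiff_union_inter T₁ (Q j), ← sdiff_union_inter T₂ (Q j), h.1, h.2]
    have hcard : #(X \ Q j) + #(Q j) = #X := card_sdiff_add_card_eq_card hQj
    have hcast : ((2 ^ #(Q j) - 1 : ℕ) : ℝ) = 2 ^ #(Q j) - 1 := by
      simp [Nat.cast_sub Nat.one_le_two_pow]
    calc (#{T ∈ X.powerset | ∀ i ∈ insert j I, ¬ Q i ⊆ T} : ℝ)
        ≤ (2 ^ #(Q j) - 1) * #Y := by rw [← hcast]; exact_mod_cast hsplit
      _ ≤ (2 ^ #(Q j) - 1) * ((∏ i ∈ I, (1 - (1 / 2 : ℝ) ^ #(Q i))) * 2 ^ #(X \ Q j)) := by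
        gcongr
        · linarith [one_le_pow₀ (M₀ := ℝ) (n := #(Q j)) one_le_two]
        · exact ih _ hQI (hdisj.subset (by simp))
      _ = (∏ i ∈ insert j I, (1 - (1 / 2 : ℝ) ^ #(Q i))) * 2 ^ #X := by
        rw [prod_insert hj, ← hcard, pow_add, one_div, inv_pow]
        field_simp

theorem pr0n_le_sum (n : ℕ) (E : Finset ℤ → Prop) (I : Finset ι) (F : ι → Finset ℤ → Prop)
    (h : ∀ S, (0 : ℤ) ∈ S → (n : ℤ) ∈ S → E S → ∃ i ∈ I, F i S) :
    pr0n n E ≤ ∑ i ∈ I, pr0n n (F i) := by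
  simp only [pr0n, ← sum_div]
  gcongr
  have hsub : {S ∈ (Icc (0 : ℤ) n).powerset | 0 ∈ S ∧ (n : ℤ) ∈ S ∧ E S} ⊆
      I.biUnion fun i => {S ∈ (Icc (0 : ℤ) n).powerset | 0 ∈ S ∧ (n : ℤ) ∈ S ∧ F i S} := by
    intro S hS
    obtain ⟨hSn, h0, hn, hES⟩ := mem_filter.1 hS
    obtain ⟨i, hi, hF⟩ := h S h0 hn hES
    exact mem_biUnion.2 ⟨i, hi, mem_filter.2 ⟨hSn, h0, hn, hF⟩⟩
  exact_mod_cast (card_le_card hsub).trans card_biUnion_le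

theorem inter_Ioo_injOn (n : ℕ) :
    Set.InjOn (· ∩ Ioo 0 (n : ℤ)) {S | S ⊆ Icc 0 (n : ℤ) ∧ 0 ∈ S ∧ (n : ℤ) ∈ S} := by
  rintro S₁ ⟨hS₁, h0₁, hn₁⟩ S₂ ⟨hS₂, h0₂, hn₂⟩ h
  ext x
  by_cases hx : x ∈ Ioo 0 (n : ℤ)
  · simpa [hx] using congrArg (x ∈ ·) h
  have endpoint : ∀ {S : Finset ℤ}, S ⊆ Icc 0 (n : ℤ) → x ∈ S → x = 0 ∨ x = n := fun hS hxS => by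
    have := hS hxS
    simp only [mem_Icc, mem_Ioo] at this hx
    omega
  constructor
  · intro hxS
    rcases endpoint hS₁ hxS with rfl | rfl
    exacts [h0₂, hn₂]
  · intro hxS
    rcases endpoint hS₂ hxS with rfl | rfl
    exacts [h0₁, hn₁]

theorem pr0n_le_prod (n : ℕ) (E : Finset ℤ → Prop) (I : Finset ι) (Q : ι → Finset ℤ)
    (hQ : ∀ i ∈ I, Q i ⊆ Icc 0 (n : ℤ)) (hdisj : (I : Set ι).PairwiseDisjoint Q)
    (hE : ∀ S, (0 : ℤ) ∈ S → (n : ℤ) ∈ S → E S → ∀ i ∈ I, ¬ Q i ⊆ S) :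
    pr0n n E ≤ ∏ i ∈ I, (1 - (1 / 2 : ℝ) ^ #(Q i ∩ Ioo 0 (n : ℤ))) := by
  have hinj : #{S ∈ (Icc (0 : ℤ) n).powerset | 0 ∈ S ∧ (n : ℤ) ∈ S ∧ E S} ≤
      #{T ∈ (Ioo (0 : ℤ) n).powerset | ∀ i ∈ I, ¬ Q i ∩ Ioo 0 (n : ℤ) ⊆ T} := by
    refine card_le_card_of_injOn (· ∩ Ioo 0 (n : ℤ)) ?_ ?_
    · intro S hS
      obtain ⟨-, h0, hn, hES⟩ := mem_filter.1 hS
      refine mem_filter.2 ⟨mem_powerset.2 inter_subset_right, fun i hi hsub => ?_⟩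
      refine hE S h0 hn hES i hi fun x hx => ?_
      by_cases hx' : x ∈ Ioo 0 (n : ℤ)
      · exact (mem_inter.1 (hsub (mem_inter.2 ⟨hx, hx'⟩))).1
      · have := hQ i hi hx
        simp only [mem_Icc, mem_Ioo] at this hx'
        rcases (by omega : x = 0 ∨ x = n) with rfl | rfl
        exacts [h0, hn]
    · intro S₁ hS₁ S₂ hS₂ h
      obtain ⟨hS₁n, h0₁, hn₁, -⟩ := mem_filter.1 hS₁
      obtain ⟨hS₂n, h0₂, hn₂, -⟩ := mem_filter.1 hS₂
      exact inter_Ioo_injOn n ⟨mem_powerset.1 hS₁n, h0₁, hn₁⟩ ⟨mem_powerset.1 hS₂n, h0₂, hn₂⟩ h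
  have hX : #(Ioo (0 : ℤ) n) = n - 1 := by simp
  calc pr0n n E
      ≤ #{T ∈ (Ioo (0 : ℤ) n).powerset | ∀ i ∈ I, ¬ Q i ∩ Ioo 0 (n : ℤ) ⊆ T} / 2 ^ (n - 1) := by
        unfold pr0n
        gcongr
    _ ≤ _ := by
        rw [div_le_iff₀ (by positivity), ← hX]
        exact card_filter_forall_not_subset_le _ I _ (fun i _ => inter_subset_right)
          (hdisj.mono fun i => inter_subset_left)

theorem pr0n_le_of_pairwiseDisjoint_pairs (n : ℕ) (E : Finset ℤ → Prop) (I : Finset ι)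
    (x y : ι → ℤ) (hx : ∀ i ∈ I, x i ∈ Icc 0 (n : ℤ)) (hy : ∀ i ∈ I, y i ∈ Icc 0 (n : ℤ))
    (hdisj : (I : Set ι).PairwiseDisjoint fun i => ({x i, y i} : Finset ℤ))
    (hE : ∀ S, (0 : ℤ) ∈ S → (n : ℤ) ∈ S → E S → ∀ i ∈ I, x i ∈ S → y i ∉ S)
    {i₀ : ι} (hi₀ : i₀ ∈ I) (h₀ : x i₀ = 0 ∨ y i₀ = n) :
    pr0n n E ≤ 1 / 2 * (3 / 4 : ℝ) ^ (#I - 1) := by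
  have weight_nonneg : ∀ m : ℕ, 0 ≤ 1 - (1 / 2 : ℝ) ^ m := fun m =>
    sub_nonneg.2 (pow_le_one₀ (by norm_num) (by norm_num))
  have weight_le : ∀ {m M : ℕ}, m ≤ M → 1 - (1 / 2 : ℝ) ^ m ≤ 1 - (1 / 2) ^ M := fun h =>
    sub_le_sub_left (pow_le_pow_of_le_one (by norm_num) (by norm_num) h) 1
  have hpair : ∀ i, #({x i, y i} ∩ Ioo 0 (n : ℤ)) ≤ 2 := fun i =>
    (card_le_card inter_subset_left).trans card_le_two
  have hend : #({x i₀, y i₀} ∩ Ioo 0 (n : ℤ)) ≤ 1 := by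
    refine card_le_one.2 fun a ha b hb => ?_
    simp only [mem_inter, mem_insert, mem_singleton, mem_Ioo] at ha hb
    omega
  calc pr0n n E
      ≤ ∏ i ∈ I, (1 - (1 / 2 : ℝ) ^ #({x i, y i} ∩ Ioo 0 (n : ℤ))) :=
        pr0n_le_prod n E I _
          (fun i hi => insert_subset (hx i hi) (singleton_subset_iff.2 (hy i hi))) hdisj
          fun S h0 hn hES i hi hsub =>
            hE S h0 hn hES i hi (hsub (mem_insert_self _ _)) (hsub (by simp))
    _ = (1 - (1 / 2 : ℝ) ^ #({x i₀, y i₀} ∩ Ioo 0 (n : ℤ))) *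
          ∏ i ∈ I.erase i₀, (1 - (1 / 2 : ℝ) ^ #({x i, y i} ∩ Ioo 0 (n : ℤ))) :=
        (mul_prod_erase I _ hi₀).symm
    _ ≤ 1 / 2 * ∏ _i ∈ I.erase i₀, (3 / 4 : ℝ) := by
        refine mul_le_mul ((weight_le hend).trans_eq (by norm_num))
          (prod_le_prod (fun i _ => weight_nonneg _) fun i _ => ?_)
          (prod_nonneg fun i _ => weight_nonneg _) (by norm_num)
        exact (weight_le (hpair i)).trans_eq (by norm_num)
    _ = 1 / 2 * (3 / 4 : ℝ) ^ (#I - 1) := by rw [prod_const, card_erase_of_mem hi₀]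

end

theorem pr0n_not_mem_add_self_le (n m : ℕ) (hm : m ≤ 2 * n) :
    pr0n n (fun S => (m : ℤ) ∉ S + S) ≤ 1 / 2 * (3 / 4 : ℝ) ^ (m / 2 - (m - n)) := by
  have hcard : #(Icc (m - n) (m / 2)) - 1 = m / 2 - (m - n) := by
    simp only [Nat.card_Icc]
    omega
  rw [← hcard]
  refine pr0n_le_of_pairwiseDisjoint_pairs n _ (Icc (m - n) (m / 2)) (fun a => (a : ℤ))
    (fun a => (m : ℤ) - a) ?_ ?_ ?_ ?_ (i₀ := m - n) ?_ (by omega)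
  · intro a ha
    simp only [mem_Icc] at ha ⊢
    omega
  · intro a ha
    simp only [mem_Icc] at ha ⊢
    omega
  · intro a ha b hb hab
    simp only [coe_Icc, Set.mem_Icc] at ha hb
    simp only [Function.onFun, disjoint_insert_left, disjoint_insert_right, disjoint_singleton,
      mem_insert, mem_singleton]
    omega
  · intro S _ _ hmS a _ ha hma
    exact hmS (by simpa using add_mem_add ha hma)
  · simp only [mem_Icc]
    omega

def evenBlocks (d N : ℕ) : Finset ℕ := {a ∈ range N | Even (a / d)}

theorem min_le_card_evenBlocks (d N : ℕ) : min d N ≤ #(evenBlocks d N) :=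
  calc min d N = #(range (min d N)) := (card_range _).symm
    _ ≤ #(evenBlocks d N) := card_le_card fun a ha => by
      simp only [mem_range, lt_min_iff] at ha
      simp [evenBlocks, ha.2, Nat.div_eq_of_lt ha.1]

theorem le_two_mul_card_evenBlocks {d : ℕ} (hd : 0 < d) (N : ℕ) :
    N ≤ 2 * #(evenBlocks d N) := by
  have hcover : range N ⊆ evenBlocks d N ∪ (evenBlocks d N).image (· + d) := by
    intro a ha
    rw [mem_range] at ha
    by_cases hev : Even (a / d)
    · exact mem_union_left _ (mem_filter.2 ⟨mem_range.2 ha, hev⟩)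
    · have had : d ≤ a := by
        by_contra h
        exact hev (by rw [Nat.div_eq_of_lt (by omega)]; exact Even.zero)
      rw [← Nat.sub_add_cancel had, Nat.add_div_right _ hd, Nat.even_add_one, not_not] at hev
      exact mem_union_right _
        (mem_image.2 ⟨a - d, mem_filter.2 ⟨mem_range.2 (by omega), hev⟩, Nat.sub_add_cancel had⟩)
  calc N = #(range N) := (card_range N).symm
    _ ≤ #(evenBlocks d N) + #((evenBlocks d N).image (· + d)) :=
      (card_le_card hcover).trans (card_union_le _ _)
    _ ≤ 2 * #(evenBlocks d N) := by
      linarith [card_image_le (s := evenBlocks d N) (f := (· + d))]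

theorem pr0n_not_mem_sub_self_le_evenBlocks (n d : ℕ) (hd : 0 < d) (hdn : d ≤ n) :
    pr0n n (fun S => (d : ℤ) ∉ S - S) ≤
      1 / 2 * (3 / 4 : ℝ) ^ (#(evenBlocks d (n - d + 1)) - 1) := by
  have hshift : ∀ a ∈ evenBlocks d (n - d + 1), ∀ b ∈ evenBlocks d (n - d + 1), a ≠ b + d := by
    intro a ha b hb h
    have hev := (mem_filter.1 ha).2
    rw [h, Nat.add_div_right _ hd, Nat.even_add_one] at hev
    exact hev (mem_filter.1 hb).2
  have hrange : ∀ a ∈ evenBlocks d (n - d + 1), a + d ≤ n := fun a ha => by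
    have := mem_range.1 (mem_filter.1 ha).1
    omega
  refine pr0n_le_of_pairwiseDisjoint_pairs n _ (evenBlocks d (n - d + 1)) (fun a => (a : ℤ))
    (fun a => (a : ℤ) + d) ?_ ?_ ?_ ?_ (i₀ := 0) ?_ (Or.inl rfl)
  · intro a ha
    have := hrange a ha
    simp only [mem_Icc]
    omega
  · intro a ha
    have := hrange a ha
    simp only [mem_Icc]
    omega
  · intro a ha b hb hab
    have := hshift a ha b hb
    have := hshift b hb a ha
    simp only [Function.onFun, disjoint_insert_left, disjoint_insert_right, disjoint_singleton,
      mem_insert, mem_singleton]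
    omega
  · intro S _ _ hdS a _ ha had
    exact hdS (by simpa using sub_mem_sub had ha)
  · exact mem_filter.2 ⟨mem_range.2 (by omega), by simp⟩

theorem pr0n_not_mem_sub_self_le (n d : ℕ) (hd : 0 < d) (hdn : d ≤ n) :
    pr0n n (fun S => (d : ℤ) ∉ S - S) ≤
      1 / 2 * (3 / 4 : ℝ) ^ (n - d) + (3 / 4 : ℝ) ^ (((n : ℝ) - 1) / 3) := by
  refine (pr0n_not_mem_sub_self_le_evenBlocks n d hd hdn).trans ?_
  set c := #(evenBlocks d (n - d + 1))
  have hmin := min_le_card_evenBlocks d (n - d + 1)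
  have hrpow : 0 ≤ (3 / 4 : ℝ) ^ (((n : ℝ) - 1) / 3) := by positivity
  rcases lt_or_ge n (2 * d) with hlarge | hsmall
  · have : (3 / 4 : ℝ) ^ (c - 1) ≤ (3 / 4) ^ (n - d) :=
      pow_le_pow_of_le_one (by norm_num) (by norm_num) (by omega)
    linarith
  · have h3 : n + 1 ≤ 3 * c := by
      have := le_two_mul_card_evenBlocks hd (n - d + 1)
      omega
    calc 1 / 2 * (3 / 4 : ℝ) ^ (c - 1)
        ≤ (3 / 4) ^ (c - 1 + 1) := by
          rw [pow_succ]
          linarith [pow_nonneg (by norm_num : (0 : ℝ) ≤ 3 / 4) (c - 1)]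
      _ = (3 / 4 : ℝ) ^ ((c : ℕ) : ℝ) := by rw [Real.rpow_natCast, Nat.sub_add_cancel (by omega)]
      _ ≤ (3 / 4) ^ (((n : ℝ) - 1) / 3) := by
          refine Real.rpow_le_rpow_of_exponent_ge (by norm_num) (by norm_num) ?_
          have : (n : ℝ) + 1 ≤ 3 * c := by exact_mod_cast h3
          linarith
      _ ≤ _ := le_add_of_nonneg_left (by positivity)

theorem pr0n_not_Icc_subset_add_self_le (n k : ℕ) :
    pr0n n (fun S => ¬ Icc ((k : ℤ) + 1) (2 * (n : ℤ) - k - 1) ⊆ S + S) ≤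
      (√3 / 2) ^ k / (1 - √3 / 2) := by
  set r : ℝ := √3 / 2
  have hr0 : 0 ≤ r := by positivity
  have hr1 : r < 1 := by
    rw [div_lt_one two_pos, Real.sqrt_lt' two_pos]
    norm_num
  have hr2 : r ^ 2 = 3 / 4 := by
    rw [div_pow, Real.sq_sqrt (by norm_num)]
    norm_num
  have hterm : ∀ i ∈ Ico k (2 * n - k - 1),
      pr0n n (fun S => ((i + 1 : ℕ) : ℤ) ∉ S + S) ≤ 1 / 2 * (r ^ i + r ^ (2 * n - 2 - i)) := by
    intro i hi
    rw [mem_Ico] at hi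
    refine (pr0n_not_mem_add_self_le n (i + 1) (by omega)).trans ?_
    rw [← hr2, ← pow_mul]
    gcongr 1 / 2 * ?_
    rcases (by omega : i ≤ 2 * ((i + 1) / 2 - (i + 1 - n)) ∨
        2 * n - 2 - i ≤ 2 * ((i + 1) / 2 - (i + 1 - n))) with h | h
    · exact (pow_le_pow_of_le_one hr0 hr1.le h).trans (le_add_of_nonneg_right (by positivity))
    · exact (pow_le_pow_of_le_one hr0 hr1.le h).trans (le_add_of_nonneg_left (by positivity))
  have hreflect : ∑ i ∈ Ico k (2 * n - k - 1), r ^ (2 * n - 2 - i) =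
      ∑ i ∈ Ico k (2 * n - k - 1), r ^ i := by
    refine sum_nbij' (fun i => 2 * n - 2 - i) (fun i => 2 * n - 2 - i) ?_ ?_ ?_ ?_ fun _ _ => rfl
    all_goals intro i hi; simp only [mem_Ico] at hi ⊢; omega
  calc pr0n n _
      ≤ ∑ i ∈ Ico k (2 * n - k - 1), pr0n n (fun S => ((i + 1 : ℕ) : ℤ) ∉ S + S) := by
        refine pr0n_le_sum n _ _ _ fun S _ _ hS => ?_
        obtain ⟨j, hj, hjS⟩ := not_subset.1 hS
        rw [mem_Icc] at hj
        refine ⟨(j - 1).toNat, mem_Ico.2 (by omega), ?_⟩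
        rwa [show (((j - 1).toNat + 1 : ℕ) : ℤ) = j by omega]
    _ ≤ ∑ i ∈ Ico k (2 * n - k - 1), 1 / 2 * (r ^ i + r ^ (2 * n - 2 - i)) := sum_le_sum hterm
    _ = ∑ i ∈ Ico k (2 * n - k - 1), r ^ i := by
        rw [← mul_sum, sum_add_distrib, hreflect]
        ring
    _ ≤ r ^ k / (1 - r) := geom_sum_Ico_le_of_lt_one hr0 hr1

theorem pr0n_not_Icc_subset_sub_self_le (n k : ℕ) :
    pr0n n (fun S => ¬ Icc (-(n : ℤ) + k + 1) ((n : ℤ) - k - 1) ⊆ S - S) ≤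
      2 * (3 / 4 : ℝ) ^ k + (n + 1) * (3 / 4 : ℝ) ^ (((n : ℝ) - 1) / 3) := by
  set B := (3 / 4 : ℝ) ^ (((n : ℝ) - 1) / 3)
  have hB : 0 ≤ B := by positivity
  have hgeom : ∑ d ∈ Icc 1 (n - k - 1), (3 / 4 : ℝ) ^ (n - d) ≤ 3 * (3 / 4) ^ k :=
    calc ∑ d ∈ Icc 1 (n - k - 1), (3 / 4 : ℝ) ^ (n - d) = ∑ j ∈ Ico (k + 1) n, (3 / 4 : ℝ) ^ j := by
          refine sum_nbij' (fun d => n - d) (fun j => n - j) ?_ ?_ ?_ ?_ fun _ _ => rfl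
          all_goals intro i hi; simp only [mem_Ico, mem_Icc] at hi ⊢; omega
      _ ≤ (3 / 4) ^ (k + 1) / (1 - 3 / 4) := geom_sum_Ico_le_of_lt_one (by norm_num) (by norm_num)
      _ = 3 * (3 / 4) ^ k := by ring
  have hcard : (#(Icc 1 (n - k - 1)) : ℝ) ≤ n + 1 := by
    rw [Nat.card_Icc]
    exact_mod_cast (by omega : n - k - 1 + 1 - 1 ≤ n + 1)
  calc pr0n n _
      ≤ ∑ d ∈ Icc 1 (n - k - 1), pr0n n (fun S => (d : ℤ) ∉ S - S) := by
        refine pr0n_le_sum n _ _ _ fun S h0 _ hS => ?_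
        obtain ⟨e, he, heS⟩ := not_subset.1 hS
        rw [mem_Icc] at he
        have he0 : e ≠ 0 := by
          rintro rfl
          exact heS (by simpa using sub_mem_sub h0 h0)
        refine ⟨e.natAbs, mem_Icc.2 (by omega), fun hmem => heS ?_⟩
        obtain ⟨a, ha, b, hb, hab⟩ := mem_sub.1 hmem
        rcases Int.natAbs_eq e with h | h
        · exact mem_sub.2 ⟨a, ha, b, hb, by omega⟩
        · exact mem_sub.2 ⟨b, hb, a, ha, by omega⟩
    _ ≤ ∑ d ∈ Icc 1 (n - k - 1), (1 / 2 * (3 / 4 : ℝ) ^ (n - d) + B) := by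
        refine sum_le_sum fun d hd => ?_
        rw [mem_Icc] at hd
        exact pr0n_not_mem_sub_self_le n d (by omega) (by omega)
    _ = 1 / 2 * ∑ d ∈ Icc 1 (n - k - 1), (3 / 4 : ℝ) ^ (n - d) + #(Icc 1 (n - k - 1)) * B := by
        rw [sum_add_distrib, ← mul_sum, sum_const, nsmul_eq_mul]
    _ ≤ 2 * (3 / 4 : ℝ) ^ k + (n + 1) * B := by
        have := mul_le_mul_of_nonneg_right hcard hB
        linarith [pow_nonneg (by norm_num : (0 : ℝ) ≤ 3 / 4) k]

theorem missing_middle_prob_0n_general (n k : ℕ) :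
    pr0n n (fun S => ¬ Finset.Icc ((k:ℤ) + 1) (2 * (n:ℤ) - k - 1) ⊆ S + S)
      ≤ (3/4 : ℝ) ^ ((k:ℝ) / 2) / (1 - Real.sqrt 3 / 2) ∧
    pr0n n (fun S => ¬ Finset.Icc (-(n:ℤ) + k + 1) ((n:ℤ) - k - 1) ⊆ S - S)
      ≤ 2 * (3/4 : ℝ) ^ k + (n + 1) * (3/4 : ℝ) ^ (((n:ℝ) - 1) / 3) := by
  have hrpow : (3 / 4 : ℝ) ^ ((k : ℝ) / 2) = (√3 / 2) ^ k := by
    rw [← Real.rpow_natCast, show (3 / 4 : ℝ) = (√3 / 2) ^ (2 : ℝ) by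
        rw [Real.rpow_two, div_pow, Real.sq_sqrt (by norm_num)]; norm_num,
      ← Real.rpow_mul (by positivity)]
    congr 1
    ring
  exact ⟨hrpow ▸ pr0n_not_Icc_subset_add_self_le n k, pr0n_not_Icc_subset_sub_self_le n k⟩

/-- bounds on the probability of a missing middle sum or difference, for a
uniform random `S ⊆ [0,n]` with `0, n ∈ S`. -/
theorem missing_middle_prob_0n (n k : ℕ) (hk : 0 < k) (hn : 2 * k < n) :
    pr0n n (fun S => ¬ Finset.Icc ((k:ℤ) + 1) (2 * (n:ℤ) - k - 1) ⊆ S + S)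
      ≤ (3/4 : ℝ) ^ ((k:ℝ) / 2) / (1 - Real.sqrt 3 / 2) ∧
    pr0n n (fun S => ¬ Finset.Icc (-(n:ℤ) + k + 1) ((n:ℤ) - k - 1) ⊆ S - S)
      ≤ 2 * (3/4 : ℝ) ^ k + (n + 1) * (3/4 : ℝ) ^ (((n:ℝ) - 1) / 3) :=
  missing_middle_prob_0n_general n k
end
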